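/- In one dimension, the optimal denoiser x̂(x) = E[m | x] of any prior with finite second moment under Gaussian noise is a nondecreasing function of x. -/

import Mathlib

open MeasureTheory Real

noncomputable def wgt (σ x m : ℝ) : ℝ := Real.exp (-(x - m) ^ 2 / (2 * σ ^ 2))

lemma wgt_pos (σ x m : ℝ) : 0 < wgt σ x m := Real.exp_pos _

lemma wgt_le_one (σ : ℝ) (hσ : 0 < σ) (x m : ℝ) : wgt σ x m ≤ 1 := by
  have h : -(x - m) ^ 2 / (2 * σ ^ 2) ≤ 0 :=
    div_nonpos_of_nonpos_of_nonneg (neg_nonpos.2 (sq_nonneg _)) (by positivity)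
  calc Real.exp (-(x - m) ^ 2 / (2 * σ ^ 2)) ≤ Real.exp 0 := Real.exp_le_exp.2 h
    _ = 1 := Real.exp_zero

lemma wgt_cont (σ x : ℝ) : Continuous (fun m => wgt σ x m) := by
  unfold wgt; fun_prop

lemma integrable_wgt (μ : Measure ℝ) [IsProbabilityMeasure μ] (σ : ℝ) (hσ : 0 < σ) (x : ℝ) :
    Integrable (fun m => wgt σ x m) μ := by
  refine (integrable_const (1 : ℝ)).mono' ((wgt_cont σ x).aestronglyMeasurable) ?_
  filter_upwards with m
  rw [Real.norm_eq_abs, abs_of_pos (wgt_pos σ x m)]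
  exact wgt_le_one σ hσ x m

lemma integrable_id' (μ : Measure ℝ) [IsProbabilityMeasure μ]
    (hmom : Integrable (fun m => m ^ 2) μ) : Integrable (fun m : ℝ => m) μ := by
  refine ((integrable_const (1 : ℝ)).add hmom).mono' ?_ ?_
  · exact aestronglyMeasurable_id
  · filter_upwards with m
    rw [Real.norm_eq_abs]
    simp only [Pi.add_apply]
    nlinarith [abs_nonneg m, sq_abs m, sq_nonneg (|m| - 1)]

lemma integrable_mwgt (μ : Measure ℝ) [IsProbabilityMeasure μ]
    (hmom : Integrable (fun m => m ^ 2) μ) (σ : ℝ) (hσ : 0 < σ) (x : ℝ) :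
    Integrable (fun m => m * wgt σ x m) μ := by
  refine (integrable_id' μ hmom).abs.mono'
    (aestronglyMeasurable_id.mul (wgt_cont σ x).aestronglyMeasurable) ?_
  filter_upwards with m
  rw [Real.norm_eq_abs, abs_mul, abs_of_pos (wgt_pos σ x m)]
  calc |m| * wgt σ x m ≤ |m| * 1 :=
        mul_le_mul_of_nonneg_left (wgt_le_one σ hσ x m) (abs_nonneg m)
    _ = |m| := mul_one _

lemma wgt_supermodular (σ : ℝ) (hσ : 0 < σ) {x y m m' : ℝ} (hxy : x ≤ y) (hmm : m' ≤ m) :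
    wgt σ x m * wgt σ y m' ≤ wgt σ y m * wgt σ x m' := by
  unfold wgt
  rw [← Real.exp_add, ← Real.exp_add]
  apply Real.exp_le_exp.2
  rw [← add_div, ← add_div]
  have hc : (0:ℝ) < 2 * σ ^ 2 := by positivity
  rw [div_le_div_iff_of_pos_right hc]
  nlinarith [mul_nonneg (sub_nonneg.2 hxy) (sub_nonneg.2 hmm)]

lemma intwgt_pos (μ : Measure ℝ) [IsProbabilityMeasure μ] (σ : ℝ) (hσ : 0 < σ) (x : ℝ) :
    0 < ∫ m, wgt σ x m ∂μ := by
  rw [integral_pos_iff_support_of_nonneg (fun m => (wgt_pos σ x m).le)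
    (integrable_wgt μ σ hσ x)]
  have : Function.support (fun m => wgt σ x m) = Set.univ := by
    ext m; simp [Function.mem_support, (wgt_pos σ x m).ne']
  simp [this]

lemma key_ineq (μ : Measure ℝ) [IsProbabilityMeasure μ]
    (hmom : Integrable (fun m => m ^ 2) μ) (σ : ℝ) (hσ : 0 < σ) {x y : ℝ} (hxy : x ≤ y) :
    (∫ m, m * wgt σ x m ∂μ) * (∫ m, wgt σ y m ∂μ) ≤
      (∫ m, m * wgt σ y m ∂μ) * (∫ m, wgt σ x m ∂μ) := by
  set P : Measure (ℝ × ℝ) := μ.prod μ with hP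
  have hiw := integrable_wgt μ σ hσ
  have him := integrable_mwgt μ hmom σ hσ
  set g : ℝ → ℝ → ℝ := fun m m' =>
    m * wgt σ y m * wgt σ x m' - m * wgt σ x m * wgt σ y m' with hg
  have hInt : Integrable (fun p : ℝ × ℝ => g p.1 p.2) P :=
    ((him y).mul_prod (hiw x)).sub ((him x).mul_prod (hiw y))
  have hInt' : Integrable (fun p : ℝ × ℝ => g p.2 p.1) P := by
    have : (fun p : ℝ × ℝ => g p.2 p.1) = (fun p : ℝ × ℝ => g p.1 p.2) ∘ Prod.swap := rfl
    rw [this]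
    exact hInt.swap
  have hswap : ∫ p, g p.2 p.1 ∂P = ∫ p, g p.1 p.2 ∂P := by
    have := integral_prod_swap (μ := μ) (ν := μ) (fun p : ℝ × ℝ => g p.1 p.2)
    simpa using this
  have hnn : 0 ≤ ∫ p, (g p.1 p.2 + g p.2 p.1) ∂P := by
    apply integral_nonneg
    intro p
    obtain ⟨m, m'⟩ := p
    simp only [hg, Pi.zero_apply]
    have key : ∀ a b : ℝ, b ≤ a →
        0 ≤ (a * wgt σ y a * wgt σ x b - a * wgt σ x a * wgt σ y b) +
          (b * wgt σ y b * wgt σ x a - b * wgt σ x b * wgt σ y a) := by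
      intro a b hba
      have h1 := wgt_supermodular σ hσ (x := x) (y := y) (m := a) (m' := b) hxy hba
      have : (a * wgt σ y a * wgt σ x b - a * wgt σ x a * wgt σ y b) +
          (b * wgt σ y b * wgt σ x a - b * wgt σ x b * wgt σ y a)
          = (a - b) * (wgt σ y a * wgt σ x b - wgt σ x a * wgt σ y b) := by ring
      rw [this]
      exact mul_nonneg (sub_nonneg.2 hba) (sub_nonneg.2 h1)
    rcases le_total m' m with h | h
    · exact key m m' h
    · have := key m' m h
      linarith
  have hI : ∫ p, g p.1 p.2 ∂P =
      (∫ m, m * wgt σ y m ∂μ) * (∫ m, wgt σ x m ∂μ) -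
      (∫ m, m * wgt σ x m ∂μ) * (∫ m, wgt σ y m ∂μ) := by
    rw [hP, integral_prod _ hInt]
    have : ∀ m : ℝ, ∫ m', g m m' ∂μ =
        m * wgt σ y m * (∫ m', wgt σ x m' ∂μ) - m * wgt σ x m * (∫ m', wgt σ y m' ∂μ) := by
      intro m
      rw [hg]
      rw [integral_sub ((hiw x).const_mul _) ((hiw y).const_mul _)]
      simp [integral_const_mul]
    simp_rw [this]
    rw [integral_sub (((him y)).mul_const _) (((him x)).mul_const _)]
    simp [integral_mul_const]
  have hadd : ∫ p, (g p.1 p.2 + g p.2 p.1) ∂P =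
      (∫ p, g p.1 p.2 ∂P) + (∫ p, g p.2 p.1 ∂P) := integral_add hInt hInt'
  have : 0 ≤ ∫ p, g p.1 p.2 ∂P := by
    rw [hadd, hswap] at hnn; linarith
  rw [hI] at this
  linarith

/-- In one dimension, the optimal denoiser `x̂(x) = E[m | x]` of any prior with
finite second moment under Gaussian noise `N(0, σ²)` is a nondecreasing
function of `x`. The posterior of `m` given `x` has density proportional to
`exp(−(x − m)²/(2σ²))` with respect to the prior `μ`. -/
theorem denoiser_monotone (μ : Measure ℝ) [IsProbabilityMeasure μ]
    (hmom : Integrable (fun m => m ^ 2) μ) (σ : ℝ) (hσ : 0 < σ) :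
    Monotone (fun x : ℝ =>
      (∫ m, Real.exp (-(x - m) ^ 2 / (2 * σ ^ 2)) ∂μ)⁻¹ *
        ∫ m, m * Real.exp (-(x - m) ^ 2 / (2 * σ ^ 2)) ∂μ) := by
  intro x y hxy
  have hA := intwgt_pos μ σ hσ x
  have hB := intwgt_pos μ σ hσ y
  have hkey := key_ineq μ hmom σ hσ hxy
  show (∫ m, wgt σ x m ∂μ)⁻¹ * (∫ m, m * wgt σ x m ∂μ) ≤
    (∫ m, wgt σ y m ∂μ)⁻¹ * (∫ m, m * wgt σ y m ∂μ)
  rw [inv_mul_eq_div, inv_mul_eq_div, div_le_div_iff₀ hA hB]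
  exact hkey
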